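/- arXiv:1106.3874 — 2 statements merged into one kernel-verified Lean document; each statement's English description precedes it below -/
import Mathlib

section
/- For n-tuples X, Y of nonempty subsets of N: Sec(X) ⊆ Sec(Y) if and only if there exists an increasing function f : B^n → B^n with |f(u)| ≤ |u| for all u such that X_i ⊆ (f̂(Y))_i for all i. -/
open scoped Classical

/-- Characteristic vector of `a` along the tuple `Z`. -/
noncomputable def chi {N : Type*} {n : ℕ} (Z : Fin n → Set N) (a : N) : Fin n → Bool :=
  fun i => decide (a ∈ Z i)

/-- Weight: number of `true` coordinates. -/
def wt {n : ℕ} (u : Fin n → Bool) : ℕ :=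
  (Finset.univ.filter fun i => u i = true).card

/-- The set of unordered sections of the tuple `X`. -/
def Sec {N : Type*} {n : ℕ} (X : Fin n → Set N) : Set (Multiset N) :=
  { m | ∃ a : Fin n → N, ∃ σ : Equiv.Perm (Fin n),
      (∀ i, a i ∈ X (σ i)) ∧ m = (List.ofFn a : Multiset N) }

/-- Lift of a boolean function to tuples of sets. -/
noncomputable def liftFn {N : Type*} {n m : ℕ}
    (f : (Fin n → Bool) → (Fin m → Bool)) (Y : Fin n → Set N) : Fin m → Set N :=
  fun i => { a | f (chi Y a) i = true }

/-!
If `Sec X ⊆ Sec Y`, take `f u i = 1` iff some `a ∈ X i` has `chi Y a ≤ u`. To see `|f u| ≤ |u|`,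
pick such witnesses `a i` (any element of `X i` where there is none); `[a_1, …, a_n]` is also a
section `c` of `Y` along a permutation `τ`, and every `c j` with `chi Y (c j) ≤ u` forces
`u (τ j) = 1`.

Conversely, given `f` and a section `a` of `X` along `σ`, Hall's condition holds for matching each
`a i` to some `j` with `a i ∈ Y j`: for a set `s` of indices let `u` be the join of the
`chi Y (a i)`, `i ∈ s`; monotonicity gives `f u (σ i) = 1` on `s`, hence
`|s| ≤ |f u| ≤ |u|`, and `|u|` is the size of the neighbourhood of `s`.
-/

section

variable {N : Type*} {n : ℕ}

lemma card_le_wt_of_injective {ι : Type*} {s : Finset ι} {σ : ι → Fin n}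
    (hσ : Function.Injective σ) {v : Fin n → Bool} (h : ∀ i ∈ s, v (σ i) = true) :
    s.card ≤ wt v :=
  Finset.card_le_card_of_injOn σ (fun i hi => by simpa using h i hi) hσ.injOn

lemma countP_ofFn_eq_card_filter {p : N → Prop} [DecidablePred p] (a : Fin n → N) :
    Multiset.countP p (List.ofFn a : Multiset N) = (Finset.univ.filter fun i => p (a i)).card := by
  rw [← Fin.univ_val_map, Multiset.countP_map]
  rfl

lemma ofFn_mem_Sec {Y : Fin n → Set N} {a : Fin n → N} {g : Fin n → Fin n}
    (hg : Function.Injective g) (ha : ∀ i, a i ∈ Y (g i)) : (List.ofFn a : Multiset N) ∈ Sec Y :=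
  ⟨a, Equiv.ofBijective g (Finite.injective_iff_bijective.mp hg), ha, rfl⟩

end

section

variable {N : Type*} {n : ℕ} (X Y : Fin n → Set N)

/-- The least monotone `f` with `X i ⊆ liftFn f Y i` for all `i`. -/
noncomputable def leastCover (u : Fin n → Bool) : Fin n → Bool :=
  fun i => decide (∃ a ∈ X i, chi Y a ≤ u)

lemma leastCover_monotone : Monotone (leastCover X Y) := fun _ _ huv i =>
  Bool.le_iff_imp.mpr fun h => by
    obtain ⟨a, ha, hau⟩ := of_decide_eq_true h
    exact decide_eq_true ⟨a, ha, hau.trans huv⟩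

lemma subset_liftFn_leastCover (i : Fin n) : X i ⊆ liftFn (leastCover X Y) Y i :=
  fun a ha => decide_eq_true ⟨a, ha, le_rfl⟩

variable {X Y}

lemma wt_leastCover_le (hX : ∀ i, (X i).Nonempty) (hsec : Sec X ⊆ Sec Y) (u : Fin n → Bool) :
    wt (leastCover X Y u) ≤ wt u := by
  have witness : ∀ i, ∃ a ∈ X i, leastCover X Y u i = true → chi Y a ≤ u := by
    intro i
    by_cases h : ∃ a ∈ X i, chi Y a ≤ u
    · obtain ⟨a, ha, hau⟩ := h
      exact ⟨a, ha, fun _ => hau⟩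
    · obtain ⟨a, ha⟩ := hX i
      exact ⟨a, ha, fun hi => absurd (of_decide_eq_true hi) h⟩
  choose a haX hau using witness
  obtain ⟨c, τ, hcY, hac⟩ := hsec ⟨a, Equiv.refl _, haX, rfl⟩
  -- `a` and `c` enumerate the same multiset, so equally many of their entries have `chi Y · ≤ u`.
  let p : N → Prop := fun b => chi Y b ≤ u
  calc wt (leastCover X Y u)
      ≤ (Finset.univ.filter fun i => p (a i)).card :=
        Finset.card_le_card (Finset.monotone_filter_right _ fun i _ => hau i)
    _ = (Finset.univ.filter fun j => p (c j)).card := by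
        simpa only [countP_ofFn_eq_card_filter] using congrArg (Multiset.countP p) hac
    _ ≤ wt u := card_le_wt_of_injective τ.injective fun j hj =>
        Bool.le_iff_imp.mp ((Finset.mem_filter.mp hj).2 (τ j)) (decide_eq_true (hcY j))

lemma card_le_card_biUnion_of_cover {f : (Fin n → Bool) → (Fin n → Bool)} (hmono : Monotone f)
    (hwt : ∀ u, wt (f u) ≤ wt u) (hsub : ∀ i, X i ⊆ liftFn f Y i)
    {a : Fin n → N} {σ : Fin n → Fin n} (hσ : Function.Injective σ) (ha : ∀ i, a i ∈ X (σ i))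
    (s : Finset (Fin n)) :
    s.card ≤ (s.biUnion fun i => Finset.univ.filter fun j => a i ∈ Y j).card := by
  let u : Fin n → Bool := fun j => decide (∃ i ∈ s, a i ∈ Y j)
  have hfu : ∀ i ∈ s, f u (σ i) = true := fun i hi =>
    Bool.le_iff_imp.mp (hmono (fun j => Bool.le_iff_imp.mpr fun hj =>
      decide_eq_true ⟨i, hi, of_decide_eq_true hj⟩) (σ i)) (hsub (σ i) (ha i))
  calc s.card ≤ wt (f u) := card_le_wt_of_injective hσ hfu
    _ ≤ wt u := hwt u
    _ = _ := by
        unfold wt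
        congr 1
        ext j
        simp [u]

lemma sec_subset_of_cover {f : (Fin n → Bool) → (Fin n → Bool)} (hmono : Monotone f)
    (hwt : ∀ u, wt (f u) ≤ wt u) (hsub : ∀ i, X i ⊆ liftFn f Y i) : Sec X ⊆ Sec Y := by
  rintro _ ⟨a, σ, ha, rfl⟩
  obtain ⟨g, hg, hag⟩ := (Finset.all_card_le_biUnion_card_iff_exists_injective _).mp
    (card_le_card_biUnion_of_cover hmono hwt hsub σ.injective ha)
  exact ofFn_mem_Sec hg fun i => by simpa using hag i

end

theorem stmt7_general {N : Type*} {n : ℕ} (X Y : Fin n → Set N)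
    (hX : ∀ i, (X i).Nonempty) :
    Sec X ⊆ Sec Y ↔
      ∃ f : (Fin n → Bool) → (Fin n → Bool),
        Monotone f ∧ (∀ u, wt (f u) ≤ wt u) ∧ ∀ i, X i ⊆ liftFn f Y i :=
  ⟨fun hsec => ⟨leastCover X Y, leastCover_monotone X Y, wt_leastCover_le hX hsec,
      subset_liftFn_leastCover X Y⟩,
    fun ⟨_, hmono, hwt, hsub⟩ => sec_subset_of_cover hmono hwt hsub⟩

theorem stmt7 {N : Type*} {n : ℕ} (X Y : Fin n → Set N)
    (hX : ∀ i, (X i).Nonempty) (hY : ∀ i, (Y i).Nonempty) :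
    Sec X ⊆ Sec Y ↔
      ∃ f : (Fin n → Bool) → (Fin n → Bool),
        Monotone f ∧ (∀ u, wt (f u) ≤ wt u) ∧ ∀ i, X i ⊆ liftFn f Y i :=
  stmt7_general X Y hX
end

section
/- For any n-tuple Y of subsets of N with Y_1 ∩ Y_2 nonempty, every unordered section of (Y_1 ∩ Y_2, Y_1 ∪ Y_2, Y_3, …, Y_n) is an unordered section of (Y_1, Y_2, Y_3, …, Y_n). -/
open scoped Classical

/- An unordered section is just the multiset of an ordinary section, since the permutation can be
absorbed into the assignment. Given a section with `x ∈ Y₀ ∩ Y₁` in slot 0 and `y ∈ Y₀ ∪ Y₁` in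
slot 1, either `y ∈ Y₁` and the same assignment is a section of `Y`, or `y ∈ Y₀` and swapping the
entries of slots 0 and 1 gives one, with the same multiset. -/

section

variable {N : Type*} {n : ℕ}

theorem mem_Sec_iff {X : Fin n → Set N} {m : Multiset N} :
    m ∈ Sec X ↔ ∃ b : Fin n → N, (∀ l, b l ∈ X l) ∧ m = (List.ofFn b : Multiset N) := by
  constructor
  · rintro ⟨a, σ, ha, rfl⟩
    exact ⟨a ∘ σ.symm, fun l => by simpa using ha (σ.symm l),
      Multiset.coe_eq_coe.2 (Equiv.Perm.ofFn_comp_perm σ.symm a).symm⟩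
  · rintro ⟨b, hb, rfl⟩
    exact ⟨b, 1, hb, rfl⟩

theorem Sec_subset_of_exchange {X Y : Fin n → Set N} {i j : Fin n}
    (hpair : ∀ x ∈ X i, ∀ y ∈ X j, (x ∈ Y i ∧ y ∈ Y j) ∨ (x ∈ Y j ∧ y ∈ Y i))
    (hrest : ∀ k, k ≠ i → k ≠ j → X k ⊆ Y k) : Sec X ⊆ Sec Y := by
  intro m hm
  obtain ⟨b, hb, rfl⟩ := mem_Sec_iff.1 hm
  rw [mem_Sec_iff]
  rcases hpair _ (hb i) _ (hb j) with ⟨hi, hj⟩ | ⟨hi, hj⟩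
  · refine ⟨b, fun k => ?_, rfl⟩
    rcases eq_or_ne k i with rfl | hki
    · exact hi
    rcases eq_or_ne k j with rfl | hkj
    · exact hj
    exact hrest k hki hkj (hb k)
  · refine ⟨b ∘ Equiv.swap i j, fun k => ?_,
      Multiset.coe_eq_coe.2 ((Equiv.swap i j).ofFn_comp_perm b).symm⟩
    rcases eq_or_ne k i with rfl | hki
    · simpa using hj
    rcases eq_or_ne k j with rfl | hkj
    · simpa using hi
    simpa [Equiv.swap_apply_of_ne_of_ne hki hkj] using hrest k hki hkj (hb k)

theorem Set.mem_inter_union_exchange {A B : Set N} {x y : N} (hx : x ∈ A ∩ B) (hy : y ∈ A ∪ B) :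
    (x ∈ A ∧ y ∈ B) ∨ (x ∈ B ∧ y ∈ A) := by
  by_cases hyB : y ∈ B
  · exact Or.inl ⟨hx.1, hyB⟩
  · exact Or.inr ⟨hx.2, hy.resolve_right hyB⟩

end

theorem stmt11_general {N : Type*} {n : ℕ} (Y : Fin (n + 2) → Set N) :
    Sec (fun i : Fin (n + 2) =>
        if i = 0 then Y 0 ∩ Y 1 else if i = 1 then Y 0 ∪ Y 1 else Y i) ⊆ Sec Y := by
  refine Sec_subset_of_exchange (i := 0) (j := 1) (fun x hx y hy => ?_) (fun k hk0 hk1 => ?_)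
  · simp only [if_neg (zero_ne_one' (Fin (n + 2))).symm] at hx hy
    exact Set.mem_inter_union_exchange hx hy
  · simp only [if_neg hk0, if_neg hk1, subset_refl]

theorem stmt11 {N : Type*} {n : ℕ} (Y : Fin (n + 2) → Set N)
    (hY : ∀ i, (Y i).Nonempty) (hcap : (Y 0 ∩ Y 1).Nonempty) :
    Sec (fun i : Fin (n + 2) =>
        if i = 0 then Y 0 ∩ Y 1 else if i = 1 then Y 0 ∪ Y 1 else Y i) ⊆ Sec Y :=
  stmt11_general Y
end
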